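/- There is a constant C>0 such that for all t>0 and all integers n with |n|²≥t and |n|≥3, the discrete Laplacian of the heat kernel satisfies |G(t,n+1)-2G(t,n)+G(t,n-1)| ≤ C/|n|³. -/

import Mathlib

noncomputable def heatKernel (t : ℝ) (n : ℤ) : ℝ :=
  Real.exp (-2 * t) *
    ∑' m : ℕ, t ^ (2 * m + n.natAbs) /
      ((m.factorial : ℝ) * Real.Gamma ((m : ℝ) + (n.natAbs : ℝ) + 1))

set_option maxHeartbeats 1000000

namespace Stmt11

open MeasureTheory intervalIntegral Set

local notation "π" => Real.pi

lemma pi_gt : (3 : ℝ) < π := Real.pi_gt_three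

lemma neg_pi_le_pi : (-π : ℝ) ≤ π := by linarith [Real.pi_pos]

/-- ∫_{-π}^{π} e^{imθ} dθ -/
lemma integral_exp_int (m : ℤ) :
    (∫ θ : ℝ in (-π)..π, Complex.exp (m * θ * Complex.I)) =
      if m = 0 then ((2 * π : ℝ) : ℂ) else 0 := by
  rcases eq_or_ne m 0 with hm | hm
  · subst hm
    simp only [Int.cast_zero, zero_mul, Complex.exp_zero, if_pos rfl]
    rw [intervalIntegral.integral_const]
    simp [Complex.real_smul]
    push_cast
    ring
  · rw [if_neg hm]
    have hD : ∀ θ : ℝ, HasDerivAt (fun x : ℝ => Complex.exp (m * x * Complex.I) / (m * Complex.I))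
        (Complex.exp (m * θ * Complex.I)) θ := by
      intro θ
      have hmI : (m : ℂ) * Complex.I ≠ 0 := by
        simp [Complex.I_ne_zero, hm]
      have h1 : HasDerivAt (fun z : ℂ => (m : ℂ) * z * Complex.I) ((m : ℂ) * Complex.I) (θ : ℂ) := by
        simpa using ((hasDerivAt_id (θ : ℂ)).const_mul (m : ℂ)).mul_const Complex.I
      have h2 := (Complex.hasDerivAt_exp ((m : ℂ) * (θ : ℂ) * Complex.I)).comp (θ : ℂ) h1
      have h3 := h2.div_const ((m : ℂ) * Complex.I)
      have h5 : HasDerivAt (fun z : ℂ => Complex.exp ((m : ℂ) * z * Complex.I) / ((m : ℂ) * Complex.I))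
          (Complex.exp ((m : ℂ) * (θ : ℂ) * Complex.I) * ((m : ℂ) * Complex.I) / ((m : ℂ) * Complex.I)) (θ : ℂ) := h3
      have h6 := h5.comp_ofReal
      simpa [mul_div_assoc, mul_div_cancel_right₀ _ hmI] using h6
    rw [intervalIntegral.integral_eq_sub_of_hasDerivAt (fun θ _ => hD θ)
      ((Continuous.intervalIntegrable (by fun_prop) _ _))]
    have key : Complex.exp ((m : ℂ) * ((π : ℝ) : ℂ) * Complex.I) =
        Complex.exp ((m : ℂ) * ((-π : ℝ) : ℂ) * Complex.I) := by
      have : (m : ℂ) * ((π : ℝ) : ℂ) * Complex.I =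
          (m : ℂ) * ((-π : ℝ) : ℂ) * Complex.I + (m : ℂ) * (2 * (π : ℂ) * Complex.I) := by
        push_cast; ring
      rw [this, Complex.exp_add, Complex.exp_int_mul_two_pi_mul_I, mul_one]
    rw [key, sub_self]

/-! ### Integral representation of the Bessel-type series -/

noncomputable def Fc (t : ℝ) (k : ℕ) (p : ℕ × ℕ) (θ : ℝ) : ℂ :=
  (t : ℂ) ^ (p.1 + p.2) * Complex.exp ((((p.1 : ℤ) - p.2 - k : ℤ) : ℂ) * θ * Complex.I) /
    ((p.1.factorial : ℂ) * (p.2.factorial : ℂ))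

lemma exp_eq_tsum (z : ℂ) : Complex.exp z = ∑' n : ℕ, z ^ n / n.factorial := by
  rw [Complex.exp_eq_exp_ℂ, NormedSpace.exp_eq_tsum_div]

lemma summable_norm_aux (x : ℝ) (z : ℂ) (hz : ‖z‖ = 1) :
    Summable fun j : ℕ => ‖((x : ℂ) * z) ^ j / (j.factorial : ℂ)‖ := by
  have h : ∀ j : ℕ, ‖((x : ℂ) * z) ^ j / (j.factorial : ℂ)‖ = |x| ^ j / j.factorial := by
    intro j
    rw [norm_div, norm_pow, norm_mul, hz, mul_one]
    simp [Complex.norm_real, Real.norm_eq_abs, Complex.norm_natCast]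
  exact (Real.summable_pow_div_factorial |x|).congr fun j => (h j).symm

lemma expand (t : ℝ) (k : ℕ) (θ : ℝ) :
    Complex.exp ((2 * t * Real.cos θ : ℝ) : ℂ) * Complex.exp (((-(k * θ) : ℝ) : ℂ) * Complex.I)
      = ∑' p : ℕ × ℕ, Fc t k p θ := by
  have hz1 : ‖Complex.exp (((θ : ℝ) : ℂ) * Complex.I)‖ = 1 := Complex.norm_exp_ofReal_mul_I θ
  have hz2 : ‖Complex.exp (((-θ : ℝ) : ℂ) * Complex.I)‖ = 1 := Complex.norm_exp_ofReal_mul_I (-θ)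
  have hsplit : ((2 * t * Real.cos θ : ℝ) : ℂ)
      = (t : ℂ) * Complex.exp (((θ : ℝ) : ℂ) * Complex.I)
        + (t : ℂ) * Complex.exp (((-θ : ℝ) : ℂ) * Complex.I) := by
    have hc : Complex.cos ((θ : ℝ) : ℂ) = (Complex.exp (((θ : ℝ) : ℂ) * Complex.I)
        + Complex.exp (-(((θ : ℝ) : ℂ)) * Complex.I)) / 2 := rfl
    push_cast
    rw [hc]
    ring
  rw [hsplit, Complex.exp_add,
    exp_eq_tsum ((t : ℂ) * Complex.exp (((θ : ℝ) : ℂ) * Complex.I)),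
    exp_eq_tsum ((t : ℂ) * Complex.exp (((-θ : ℝ) : ℂ) * Complex.I)),
    tsum_mul_tsum_of_summable_norm (summable_norm_aux t _ hz1) (summable_norm_aux t _ hz2),
    ← tsum_mul_right]
  apply tsum_congr
  intro p
  obtain ⟨j, l⟩ := p
  show ((t : ℂ) * Complex.exp (((θ : ℝ) : ℂ) * Complex.I)) ^ j / (j.factorial : ℂ) *
      (((t : ℂ) * Complex.exp (((-θ : ℝ) : ℂ) * Complex.I)) ^ l / (l.factorial : ℂ)) *
      Complex.exp (((-(k * θ) : ℝ) : ℂ) * Complex.I) = Fc t k (j, l) θ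
  unfold Fc
  rw [mul_pow, mul_pow, ← Complex.exp_nat_mul, ← Complex.exp_nat_mul,
    div_mul_div_comm, div_mul_eq_mul_div]
  congr 1
  rw [mul_mul_mul_comm, ← pow_add, mul_assoc, ← Complex.exp_add, ← Complex.exp_add]
  congr 1
  push_cast
  ring

lemma continuous_Fc (t : ℝ) (k : ℕ) (p : ℕ × ℕ) : Continuous (Fc t k p) := by
  unfold Fc
  fun_prop

lemma repC (t : ℝ) (k : ℕ) :
    (∫ θ in (-π)..π, Complex.exp ((2 * t * Real.cos θ : ℝ) : ℂ) *
        Complex.exp (((-(k * θ) : ℝ) : ℂ) * Complex.I))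
      = ((2 * π : ℝ) : ℂ) *
          ∑' m : ℕ, (t : ℂ) ^ (2 * m + k) / ((m.factorial : ℂ) * ((m + k).factorial : ℂ)) := by
  have hle : (-π : ℝ) ≤ π := neg_pi_le_pi
  have hint : ∀ p : ℕ × ℕ, IntegrableOn (Fc t k p) (Ioc (-π) π) := fun p =>
    (intervalIntegrable_iff_integrableOn_Ioc_of_le hle).mp
      ((continuous_Fc t k p).intervalIntegrable _ _)
  have hnorm : ∀ (p : ℕ × ℕ) (θ : ℝ), ‖Fc t k p θ‖
      = |t| ^ (p.1 + p.2) / (p.1.factorial * p.2.factorial) := by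
    intro p θ
    unfold Fc
    have harg : ((((p.1 : ℤ) - p.2 - k : ℤ) : ℂ)) * θ * Complex.I
        = (((((p.1 : ℤ) - p.2 - k : ℤ) : ℝ) * θ : ℝ) : ℂ) * Complex.I := by push_cast; ring
    rw [norm_div, norm_mul, norm_pow, harg, Complex.norm_exp_ofReal_mul_I, mul_one, norm_mul]
    simp [Complex.norm_real, Real.norm_eq_abs, Complex.norm_natCast]
  have hIoc : ∀ p : ℕ × ℕ, (∫ θ in Ioc (-π) π, ‖Fc t k p θ‖)
      = (2 * π) * (|t| ^ p.1 / p.1.factorial * (|t| ^ p.2 / p.2.factorial)) := by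
    intro p
    simp_rw [hnorm]
    rw [setIntegral_const, Real.volume_real_Ioc_of_le hle, smul_eq_mul,
      pow_add]
    ring
  have hsum : Summable (fun p : ℕ × ℕ => ∫ θ in Ioc (-π) π, ‖Fc t k p θ‖) := by
    refine Summable.congr ?_ (fun p => (hIoc p).symm)
    exact (((Real.summable_pow_div_factorial |t|).mul_of_nonneg
      (Real.summable_pow_div_factorial |t|) (fun j => by positivity)
      (fun l => by positivity))).mul_left _
  have hswap := MeasureTheory.integral_tsum_of_summable_integral_norm
    (μ := volume.restrict (Ioc (-π) π)) (F := Fc t k) hint hsum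
  have hper : ∀ p : ℕ × ℕ, (∫ θ, Fc t k p θ ∂(volume.restrict (Ioc (-π) π)))
      = ((t : ℂ) ^ (p.1 + p.2) / ((p.1.factorial : ℂ) * (p.2.factorial : ℂ))) *
          (if ((p.1 : ℤ) - p.2 - k) = 0 then ((2 * π : ℝ) : ℂ) else 0) := by
    intro p
    have hconst : ∀ θ : ℝ, Fc t k p θ
        = ((t : ℂ) ^ (p.1 + p.2) / ((p.1.factorial : ℂ) * (p.2.factorial : ℂ))) *
          Complex.exp ((((p.1 : ℤ) - p.2 - k : ℤ) : ℂ) * θ * Complex.I) := by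
      intro θ; unfold Fc; ring
    rw [← intervalIntegral.integral_of_le hle]
    simp_rw [hconst]
    rw [intervalIntegral.integral_const_mul, integral_exp_int]
  have hreindex : (∑' p : ℕ × ℕ,
        ((t : ℂ) ^ (p.1 + p.2) / ((p.1.factorial : ℂ) * (p.2.factorial : ℂ))) *
          (if ((p.1 : ℤ) - p.2 - k) = 0 then ((2 * π : ℝ) : ℂ) else 0))
      = ∑' m : ℕ, ((t : ℂ) ^ (2 * m + k) / ((m.factorial : ℂ) * ((m + k).factorial : ℂ))) *
          ((2 * π : ℝ) : ℂ) := by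
    have hg : Function.Injective (fun m : ℕ => ((m + k, m) : ℕ × ℕ)) := by
      intro a b h
      simpa using congrArg Prod.snd h
    rw [← Function.Injective.tsum_eq hg ?_]
    · apply tsum_congr
      intro m
      have hcond : (((m + k : ℕ) : ℤ) - (m : ℤ) - (k : ℤ)) = 0 := by push_cast; ring
      rw [if_pos hcond, show (m + k) + m = 2 * m + k by omega]
      ring
    · intro p hp
      rw [Function.mem_support] at hp
      have hcond : ((p.1 : ℤ) - p.2 - k) = 0 := by
        by_contra h
        exact hp (by simp only [if_neg h, mul_zero])
      refine ⟨p.2, ?_⟩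
      have h2 : p.2 + k = p.1 := by omega
      simp [Prod.ext_iff, h2]
  have hR : (∫ θ, (∑' p : ℕ × ℕ, Fc t k p θ) ∂(volume.restrict (Ioc (-π) π)))
      = ∫ θ in (-π)..π, Complex.exp ((2 * t * Real.cos θ : ℝ) : ℂ) *
          Complex.exp (((-(k * θ) : ℝ) : ℂ) * Complex.I) := by
    rw [intervalIntegral.integral_of_le hle]
    exact MeasureTheory.integral_congr_ae
      (Filter.Eventually.of_forall fun θ => (expand t k θ).symm)
  calc (∫ θ in (-π)..π, Complex.exp ((2 * t * Real.cos θ : ℝ) : ℂ) *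
        Complex.exp (((-(k * θ) : ℝ) : ℂ) * Complex.I))
      = ∑' p : ℕ × ℕ, ∫ θ, Fc t k p θ ∂(volume.restrict (Ioc (-π) π)) := by
        rw [hswap, hR]
    _ = ∑' p : ℕ × ℕ, ((t : ℂ) ^ (p.1 + p.2) / ((p.1.factorial : ℂ) * (p.2.factorial : ℂ))) *
          (if ((p.1 : ℤ) - p.2 - k) = 0 then ((2 * π : ℝ) : ℂ) else 0) := tsum_congr hper
    _ = ∑' m : ℕ, ((t : ℂ) ^ (2 * m + k) / ((m.factorial : ℂ) * ((m + k).factorial : ℂ))) *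
          ((2 * π : ℝ) : ℂ) := hreindex
    _ = ((2 * π : ℝ) : ℂ) *
          ∑' m : ℕ, (t : ℂ) ^ (2 * m + k) / ((m.factorial : ℂ) * ((m + k).factorial : ℂ)) := by
        rw [tsum_mul_right, mul_comm]

lemma rep (t : ℝ) (k : ℕ) :
    (∫ θ in (-π)..π, Real.exp (2 * t * Real.cos θ) * Real.cos (k * θ))
      = 2 * π * ∑' m : ℕ, t ^ (2 * m + k) / (m.factorial * (m + k).factorial) := by
  have h1 := repC t k
  have hA : (∫ θ in (-π)..π, Complex.exp ((2 * t * Real.cos θ : ℝ) : ℂ) *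
        Complex.exp (((k * θ : ℝ) : ℂ) * Complex.I))
      = ∫ θ in (-π)..π, Complex.exp ((2 * t * Real.cos θ : ℝ) : ℂ) *
        Complex.exp (((-(k * θ) : ℝ) : ℂ) * Complex.I) := by
    have hcn := intervalIntegral.integral_comp_neg (a := -π) (b := π)
      (fun θ : ℝ => Complex.exp ((2 * t * Real.cos θ : ℝ) : ℂ) *
        Complex.exp (((-(k * θ) : ℝ) : ℂ) * Complex.I))
    rw [neg_neg] at hcn
    rw [← hcn]
    apply intervalIntegral.integral_congr
    intro θ _
    have e1 : (2 * t * Real.cos (-θ) : ℝ) = (2 * t * Real.cos θ : ℝ) := by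
      rw [Real.cos_neg]
    have e2 : (-(↑k * -θ) : ℝ) = (↑k * θ : ℝ) := by ring
    dsimp only
    rw [e1, e2]
  have hcast : ∀ θ : ℝ, ((Real.exp (2 * t * Real.cos θ) * Real.cos (k * θ) : ℝ) : ℂ)
      = (Complex.exp ((2 * t * Real.cos θ : ℝ) : ℂ) * Complex.exp (((k * θ : ℝ) : ℂ) * Complex.I)
        + Complex.exp ((2 * t * Real.cos θ : ℝ) : ℂ) *
            Complex.exp (((-(k * θ) : ℝ) : ℂ) * Complex.I)) / 2 := by
    intro θ
    have hc : Complex.cos (((k * θ : ℝ)) : ℂ) = (Complex.exp ((((k * θ : ℝ)) : ℂ) * Complex.I)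
        + Complex.exp (-(((k * θ : ℝ)) : ℂ) * Complex.I)) / 2 := rfl
    rw [Complex.ofReal_mul, Complex.ofReal_exp, Complex.ofReal_cos, hc]
    push_cast
    ring
  have hint1 : IntervalIntegrable (fun θ : ℝ => Complex.exp ((2 * t * Real.cos θ : ℝ) : ℂ) *
      Complex.exp (((k * θ : ℝ) : ℂ) * Complex.I)) volume (-π) π :=
    Continuous.intervalIntegrable (by fun_prop) _ _
  have hint2 : IntervalIntegrable (fun θ : ℝ => Complex.exp ((2 * t * Real.cos θ : ℝ) : ℂ) *
      Complex.exp (((-(k * θ) : ℝ) : ℂ) * Complex.I)) volume (-π) π :=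
    Continuous.intervalIntegrable (by fun_prop) _ _
  have hmain : ((∫ θ in (-π)..π, Real.exp (2 * t * Real.cos θ) * Real.cos (k * θ) : ℝ) : ℂ)
      = ((2 * π : ℝ) : ℂ) *
          ∑' m : ℕ, (t : ℂ) ^ (2 * m + k) / ((m.factorial : ℂ) * ((m + k).factorial : ℂ)) := by
    rw [← intervalIntegral.integral_ofReal]
    simp_rw [hcast]
    rw [intervalIntegral.integral_div, intervalIntegral.integral_add hint1 hint2, hA, h1]
    ring
  have hsum : ((∑' m : ℕ, t ^ (2 * m + k) / (m.factorial * (m + k).factorial) : ℝ) : ℂ)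
      = ∑' m : ℕ, (t : ℂ) ^ (2 * m + k) / ((m.factorial : ℂ) * ((m + k).factorial : ℂ)) := by
    rw [Complex.ofReal_tsum]
    exact tsum_congr fun m => by push_cast; ring
  rw [← hsum] at hmain
  have : ((∫ θ in (-π)..π, Real.exp (2 * t * Real.cos θ) * Real.cos (k * θ) : ℝ) : ℂ)
      = (((2 * π) * ∑' m : ℕ, t ^ (2 * m + k) / (m.factorial * (m + k).factorial) : ℝ) : ℂ) := by
    rw [hmain]; push_cast; ring
  exact_mod_cast this

/-! ### Part B : second difference, integration by parts, bounds -/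

noncomputable def Ee (t θ : ℝ) : ℝ := Real.exp (2 * t * (Real.cos θ - 1))

noncomputable def ff (t θ : ℝ) : ℝ := Ee t θ * (1 - Real.cos θ)

noncomputable def f1 (t θ : ℝ) : ℝ :=
  Ee t θ * (Real.sin θ * (1 - 2 * t * (1 - Real.cos θ)))

noncomputable def f2 (t θ : ℝ) : ℝ :=
  Ee t θ * ((Real.cos θ - 2 * t * Real.sin θ ^ 2) * (1 - 2 * t * (1 - Real.cos θ))
    - 2 * t * Real.sin θ ^ 2)

noncomputable def f3 (t θ : ℝ) : ℝ :=
  Ee t θ * (Real.sin θ *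
    (-2 * t * (Real.cos θ - 2 * t * Real.sin θ ^ 2) * (1 - 2 * t * (1 - Real.cos θ))
      + 4 * t ^ 2 * Real.sin θ ^ 2
      - (1 + 4 * t * Real.cos θ) * (1 - 2 * t * (1 - Real.cos θ))
      - 2 * t * (Real.cos θ - 2 * t * Real.sin θ ^ 2) - 4 * t * Real.cos θ))

lemma continuous_Ee (t : ℝ) : Continuous (Ee t) := by unfold Ee; fun_prop
lemma continuous_ff (t : ℝ) : Continuous (ff t) := by unfold ff Ee; fun_prop
lemma continuous_f1 (t : ℝ) : Continuous (f1 t) := by unfold f1 Ee; fun_prop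
lemma continuous_f2 (t : ℝ) : Continuous (f2 t) := by unfold f2 Ee; fun_prop
lemma continuous_f3 (t : ℝ) : Continuous (f3 t) := by unfold f3 Ee; fun_prop

lemma hasDerivAt_Ee (t θ : ℝ) : HasDerivAt (Ee t) (Ee t θ * (2 * t * -Real.sin θ)) θ := by
  unfold Ee
  exact (((Real.hasDerivAt_cos θ).sub_const 1).const_mul (2 * t)).exp

lemma hasDerivAt_inner (t θ : ℝ) :
    HasDerivAt (fun θ => 1 - 2 * t * (1 - Real.cos θ)) (-(2 * t * Real.sin θ)) θ := by
  have h := (((Real.hasDerivAt_cos θ).const_sub 1).const_mul (2 * t)).const_sub 1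
  refine h.congr_deriv ?_
  ring

lemma hasDerivAt_sinsq (t θ : ℝ) :
    HasDerivAt (fun θ => Real.sin θ ^ 2) (2 * Real.sin θ * Real.cos θ) θ := by
  have h := (Real.hasDerivAt_sin θ).pow 2
  refine h.congr_deriv ?_
  push_cast
  ring

lemma hasDerivAt_ff (t θ : ℝ) : HasDerivAt (ff t) (f1 t θ) θ := by
  unfold ff
  have h := (hasDerivAt_Ee t θ).mul ((Real.hasDerivAt_cos θ).const_sub 1)
  refine h.congr_deriv ?_
  unfold f1 Ee
  ring

lemma hasDerivAt_f1 (t θ : ℝ) : HasDerivAt (f1 t) (f2 t θ) θ := by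
  unfold f1
  have h := (hasDerivAt_Ee t θ).mul ((Real.hasDerivAt_sin θ).mul (hasDerivAt_inner t θ))
  refine h.congr_deriv ?_
  unfold f2 Ee
  simp only [Pi.mul_apply, Pi.sub_apply]
  ring

lemma hasDerivAt_f2 (t θ : ℝ) : HasDerivAt (f2 t) (f3 t θ) θ := by
  unfold f2
  have hA := (((Real.hasDerivAt_cos θ).sub ((hasDerivAt_sinsq t θ).const_mul (2 * t))).mul
      (hasDerivAt_inner t θ)).sub ((hasDerivAt_sinsq t θ).const_mul (2 * t))
  have h := (hasDerivAt_Ee t θ).mul hA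
  refine h.congr_deriv ?_
  unfold f3 Ee
  simp only [Pi.mul_apply, Pi.sub_apply]
  ring

lemma hasDerivAt_H (t : ℝ) (k : ℕ) (hk : (k : ℝ) ≠ 0) (θ : ℝ) :
    HasDerivAt (fun θ => ff t θ * Real.sin (k * θ) / k + f1 t θ * Real.cos (k * θ) / (k : ℝ) ^ 2
        - f2 t θ * Real.sin (k * θ) / (k : ℝ) ^ 3)
      (ff t θ * Real.cos (k * θ) - f3 t θ * Real.sin (k * θ) / (k : ℝ) ^ 3) θ := by
  have hlin : HasDerivAt (fun θ : ℝ => (k : ℝ) * θ) (k : ℝ) θ := by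
    simpa using (hasDerivAt_id θ).const_mul (k : ℝ)
  have hsin : HasDerivAt (fun θ : ℝ => Real.sin (k * θ)) (Real.cos (k * θ) * k) θ := by
    exact (Real.hasDerivAt_sin ((k : ℝ) * θ)).comp θ hlin
  have hcos : HasDerivAt (fun θ : ℝ => Real.cos (k * θ)) (-Real.sin (k * θ) * k) θ := by
    exact (Real.hasDerivAt_cos ((k : ℝ) * θ)).comp θ hlin
  have h := ((((hasDerivAt_ff t θ).mul hsin).div_const k).add
      (((hasDerivAt_f1 t θ).mul hcos).div_const ((k : ℝ) ^ 2))).sub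
    (((hasDerivAt_f2 t θ).mul hsin).div_const ((k : ℝ) ^ 3))
  have hd1 := hasDerivAt_f1 t θ
  have hd2 := hasDerivAt_f2 t θ
  have hd3 := hasDerivAt_f2 t θ
  refine h.congr_deriv ?_
  field_simp
  ring

lemma ibp (t : ℝ) (k : ℕ) (hk : 1 ≤ k) :
    ∫ θ in (-π)..π, ff t θ * Real.cos (k * θ)
      = (∫ θ in (-π)..π, f3 t θ * Real.sin (k * θ)) / (k : ℝ) ^ 3 := by
  have hk0 : (k : ℝ) ≠ 0 := by positivity
  have hck : Continuous fun θ : ℝ => Real.cos ((k : ℝ) * θ) :=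
    Real.continuous_cos.comp (continuous_const.mul continuous_id)
  have hsk : Continuous fun θ : ℝ => Real.sin ((k : ℝ) * θ) :=
    Real.continuous_sin.comp (continuous_const.mul continuous_id)
  have hintf : IntervalIntegrable (fun θ => ff t θ * Real.cos (k * θ)) volume (-π) π :=
    ((continuous_ff t).mul hck).intervalIntegrable _ _
  have hint3 : IntervalIntegrable (fun θ => f3 t θ * Real.sin (k * θ) / (k : ℝ) ^ 3)
      volume (-π) π :=
    (((continuous_f3 t).mul hsk).div_const _).intervalIntegrable _ _
  have hftc := intervalIntegral.integral_eq_sub_of_hasDerivAt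
    (f := fun θ => ff t θ * Real.sin (k * θ) / k + f1 t θ * Real.cos (k * θ) / (k : ℝ) ^ 2
        - f2 t θ * Real.sin (k * θ) / (k : ℝ) ^ 3)
    (f' := fun θ => ff t θ * Real.cos (k * θ) - f3 t θ * Real.sin (k * θ) / (k : ℝ) ^ 3)
    (a := -π) (b := π)
    (fun θ _ => hasDerivAt_H t k hk0 θ)
    (hintf.sub hint3)
  have hsinkpi : Real.sin ((k : ℝ) * π) = 0 := Real.sin_nat_mul_pi k
  have hsinkmpi : Real.sin ((k : ℝ) * (-π)) = 0 := by
    rw [mul_neg, Real.sin_neg, hsinkpi, neg_zero]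
  have hf1pi : f1 t π = 0 := by unfold f1; rw [Real.sin_pi]; ring
  have hf1mpi : f1 t (-π) = 0 := by unfold f1; rw [Real.sin_neg, Real.sin_pi]; ring
  rw [intervalIntegral.integral_sub hintf hint3] at hftc
  simp only [hsinkpi, hsinkmpi, hf1pi, hf1mpi, mul_zero, zero_mul, zero_div, add_zero,
    zero_add, sub_zero, zero_sub, neg_zero, sub_self] at hftc
  have hdiv : (∫ θ in (-π)..π, f3 t θ * Real.sin (k * θ) / (k : ℝ) ^ 3)
      = (∫ θ in (-π)..π, f3 t θ * Real.sin (k * θ)) / (k : ℝ) ^ 3 :=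
    intervalIntegral.integral_div _ _
  rw [hdiv] at hftc
  linarith [hftc]

lemma keyineq (t c s : ℝ) (ht : 0 < t) (hc1 : -1 ≤ c) (hc2 : c ≤ 1)
    (hpy : s ^ 2 + c ^ 2 = 1) :
    |Real.exp (2 * t * (c - 1)) *
        (s * (-2 * t * (c - 2 * t * s ^ 2) * (1 - 2 * t * (1 - c))
          + 4 * t ^ 2 * s ^ 2
          - (1 + 4 * t * c) * (1 - 2 * t * (1 - c))
          - 2 * t * (c - 2 * t * s ^ 2) - 4 * t * c))|
      ≤ 4 * |s| + 150 * (t * (|s| * Real.exp (-(t * (1 - c))))) := by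
  set w := Real.exp (-(t * (1 - c))) with hw
  have hs2 : s ^ 2 ≤ 2 * (1 - c) := by nlinarith
  have hs2n : 0 ≤ s ^ 2 := sq_nonneg s
  have hs0 : (0 : ℝ) ≤ |s| := abs_nonneg s
  have hu0 : (0 : ℝ) ≤ 1 - c := by linarith
  have htu : 0 ≤ t * (1 - c) := mul_nonneg ht.le hu0
  have hw0 : 0 < w := Real.exp_pos _
  have hw1 : w ≤ 1 := by
    rw [hw]
    calc Real.exp (-(t * (1 - c))) ≤ Real.exp 0 := Real.exp_le_exp.mpr (by linarith)
      _ = 1 := Real.exp_zero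
  have hEpos : 0 < Real.exp (t * (1 - c)) := Real.exp_pos _
  have hlin : t * (1 - c) ≤ Real.exp (t * (1 - c)) := by
    linarith [Real.add_one_le_exp (t * (1 - c))]
  have h1 : t * (1 - c) * w ≤ 1 := by
    have he : t * (1 - c) * w = (t * (1 - c)) / Real.exp (t * (1 - c)) := by
      rw [hw, Real.exp_neg]; ring
    rw [he]
    exact (div_le_one hEpos).mpr hlin
  have h2 : (t * (1 - c)) ^ 2 * w ≤ 4 := by
    have hhalf := Real.add_one_le_exp (t * (1 - c) / 2)
    have hsq : Real.exp (t * (1 - c)) = Real.exp (t * (1 - c) / 2) ^ 2 := by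
      rw [sq, ← Real.exp_add]; ring_nf
    have hq := mul_nonneg
      (by linarith : (0 : ℝ) ≤ Real.exp (t * (1 - c) / 2) - t * (1 - c) / 2)
      (by nlinarith [Real.exp_pos (t * (1 - c) / 2)] :
        (0 : ℝ) ≤ Real.exp (t * (1 - c) / 2) + t * (1 - c) / 2)
    have hquad : (t * (1 - c)) ^ 2 ≤ 4 * Real.exp (t * (1 - c)) := by nlinarith [hq, hsq]
    have he : (t * (1 - c)) ^ 2 * w = (t * (1 - c)) ^ 2 / Real.exp (t * (1 - c)) := by
      rw [hw, Real.exp_neg]; ring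
    rw [he, div_le_iff₀ hEpos]
    linarith
  have hE : Real.exp (2 * t * (c - 1)) = w ^ 2 := by
    rw [hw, sq, ← Real.exp_add]
    congr 1
    ring
  have hB : |(-2 * t * (c - 2 * t * s ^ 2) * (1 - 2 * t * (1 - c))
      + 4 * t ^ 2 * s ^ 2
      - (1 + 4 * t * c) * (1 - 2 * t * (1 - c))
      - 2 * t * (c - 2 * t * s ^ 2) - 4 * t * c)|
      ≤ 1 + 2 * (t * (1 - c)) + 12 * t + 36 * (t ^ 2 * (1 - c)) + 16 * (t ^ 3 * (1 - c) ^ 2) := by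
    rw [abs_le]
    constructor
    · nlinarith [htu,
        mul_nonneg (mul_nonneg ht.le ht.le) hu0,
        mul_nonneg (mul_nonneg ht.le ht.le) hs2n,
        mul_nonneg (mul_nonneg (mul_nonneg ht.le ht.le) hu0) (by linarith : (0:ℝ) ≤ 1 + c),
        mul_nonneg (mul_nonneg (mul_nonneg (mul_nonneg ht.le ht.le) ht.le) hu0)
          (by linarith : (0:ℝ) ≤ 2 * (1 - c) - s ^ 2)]
    · nlinarith [mul_nonneg ht.le (by linarith : (0:ℝ) ≤ 1 + c),
        mul_nonneg (mul_nonneg ht.le ht.le) (by linarith : (0:ℝ) ≤ 2 * (1 - c) - s ^ 2),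
        mul_nonneg (mul_nonneg (mul_nonneg ht.le ht.le) hu0) (by linarith : (0:ℝ) ≤ 1 - c),
        mul_nonneg (mul_nonneg (mul_nonneg ht.le ht.le) ht.le) (mul_nonneg hu0 hu0),
        mul_nonneg (mul_nonneg (mul_nonneg (mul_nonneg ht.le ht.le) ht.le) hu0) hs2n]
  have hP : w ^ 2 * (1 + 2 * (t * (1 - c)) + 12 * t + 36 * (t ^ 2 * (1 - c))
        + 16 * (t ^ 3 * (1 - c) ^ 2))
      ≤ 4 + 150 * (t * w) := by
    have c1 : w * w ≤ 1 := by nlinarith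
    have c2 : t * (1 - c) * (w * w) ≤ 1 := by nlinarith
    have c3 : t ^ 2 * (1 - c) * (w * w) ≤ t * w := by
      have := mul_le_mul_of_nonneg_right h1 (mul_nonneg ht.le hw0.le)
      nlinarith
    have c4 : t ^ 3 * (1 - c) ^ 2 * (w * w) ≤ 4 * (t * w) := by
      have := mul_le_mul_of_nonneg_right h2 (mul_nonneg ht.le hw0.le)
      nlinarith
    have c5 : t * (w * w) ≤ t * w := by nlinarith [mul_nonneg ht.le hw0.le]
    nlinarith [mul_nonneg ht.le hw0.le]
  rw [abs_mul, abs_mul, abs_of_pos (Real.exp_pos _), hE]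
  calc w ^ 2 * (|s| * |(-2 * t * (c - 2 * t * s ^ 2) * (1 - 2 * t * (1 - c))
        + 4 * t ^ 2 * s ^ 2 - (1 + 4 * t * c) * (1 - 2 * t * (1 - c))
        - 2 * t * (c - 2 * t * s ^ 2) - 4 * t * c)|)
      ≤ w ^ 2 * (|s| * (1 + 2 * (t * (1 - c)) + 12 * t + 36 * (t ^ 2 * (1 - c))
          + 16 * (t ^ 3 * (1 - c) ^ 2))) := by
        apply mul_le_mul_of_nonneg_left (mul_le_mul_of_nonneg_left hB hs0) (by positivity)
    _ = |s| * (w ^ 2 * (1 + 2 * (t * (1 - c)) + 12 * t + 36 * (t ^ 2 * (1 - c))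
          + 16 * (t ^ 3 * (1 - c) ^ 2))) := by ring
    _ ≤ |s| * (4 + 150 * (t * w)) := mul_le_mul_of_nonneg_left hP hs0
    _ = 4 * |s| + 150 * (t * (|s| * w)) := by ring

lemma f3_abs_le (t : ℝ) (ht : 0 < t) (θ : ℝ) :
    |f3 t θ| ≤ 4 * |Real.sin θ|
      + 150 * (t * (|Real.sin θ| * Real.exp (-(t * (1 - Real.cos θ))))) := by
  unfold f3 Ee
  exact keyineq t (Real.cos θ) (Real.sin θ) ht (Real.neg_one_le_cos θ) (Real.cos_le_one θ)
    (Real.sin_sq_add_cos_sq θ)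

lemma bnd_integral (t : ℝ) (ht : 0 < t) :
    (∫ θ in (-π)..π, (4 * |Real.sin θ|
      + 150 * (t * (|Real.sin θ| * Real.exp (-(t * (1 - Real.cos θ))))))) ≤ 316 := by
  have hcont : Continuous (fun θ : ℝ => 4 * |Real.sin θ|
      + 150 * (t * (|Real.sin θ| * Real.exp (-(t * (1 - Real.cos θ)))))) := by
    fun_prop
  have hi : ∀ a b : ℝ, IntervalIntegrable (fun θ : ℝ => 4 * |Real.sin θ|
      + 150 * (t * (|Real.sin θ| * Real.exp (-(t * (1 - Real.cos θ)))))) volume a b :=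
    fun a b => hcont.intervalIntegrable _ _
  have hin : ∀ θ : ℝ, HasDerivAt (fun θ : ℝ => -(t * (1 - Real.cos θ))) (-(t * Real.sin θ)) θ := by
    intro θ
    have h := (((Real.hasDerivAt_cos θ).const_sub 1).const_mul t).neg
    refine h.congr_deriv ?_
    ring
  have hright : (∫ θ in (0:ℝ)..π, (4 * |Real.sin θ|
      + 150 * (t * (|Real.sin θ| * Real.exp (-(t * (1 - Real.cos θ)))))))
      = 8 + 150 * (1 - Real.exp (-(t * 2))) := by
    rw [intervalIntegral.integral_congr (g := fun θ => 4 * Real.sin θ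
      + 150 * (t * (Real.sin θ * Real.exp (-(t * (1 - Real.cos θ))))))
      (by
        intro θ hθ
        rw [Set.uIcc_of_le Real.pi_nonneg] at hθ
        have hsin : 0 ≤ Real.sin θ := Real.sin_nonneg_of_nonneg_of_le_pi hθ.1 hθ.2
        simp only [abs_of_nonneg hsin])]
    have hgd : ∀ θ : ℝ, HasDerivAt
        (fun θ => -4 * Real.cos θ - 150 * Real.exp (-(t * (1 - Real.cos θ))))
        (4 * Real.sin θ + 150 * (t * (Real.sin θ * Real.exp (-(t * (1 - Real.cos θ)))))) θ := by
      intro θ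
      have h := ((Real.hasDerivAt_cos θ).const_mul (-4)).sub (((hin θ).exp).const_mul 150)
      refine h.congr_deriv ?_
      ring
    rw [intervalIntegral.integral_eq_sub_of_hasDerivAt (fun θ _ => hgd θ)
      (Continuous.intervalIntegrable (by fun_prop) _ _)]
    rw [Real.cos_pi, Real.cos_zero]
    have e1 : -(t * (1 - (-1 : ℝ))) = -(t * 2) := by ring
    have e2 : -(t * (1 - (1 : ℝ))) = 0 := by ring
    rw [e1, e2, Real.exp_zero]
    ring
  have hleft : (∫ θ in (-π)..(0:ℝ), (4 * |Real.sin θ|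
      + 150 * (t * (|Real.sin θ| * Real.exp (-(t * (1 - Real.cos θ)))))))
      = 8 + 150 * (1 - Real.exp (-(t * 2))) := by
    rw [intervalIntegral.integral_congr (g := fun θ => -(4 * Real.sin θ)
      - 150 * (t * (Real.sin θ * Real.exp (-(t * (1 - Real.cos θ))))))
      (by
        intro θ hθ
        rw [Set.uIcc_of_le (by linarith [Real.pi_pos] : -π ≤ (0:ℝ))] at hθ
        have hsin : Real.sin θ ≤ 0 := Real.sin_nonpos_of_nonpos_of_neg_pi_le hθ.2 hθ.1
        simp only [abs_of_nonpos hsin]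
        ring)]
    have hgd : ∀ θ : ℝ, HasDerivAt
        (fun θ => 4 * Real.cos θ + 150 * Real.exp (-(t * (1 - Real.cos θ))))
        (-(4 * Real.sin θ) - 150 * (t * (Real.sin θ * Real.exp (-(t * (1 - Real.cos θ)))))) θ := by
      intro θ
      have h := ((Real.hasDerivAt_cos θ).const_mul 4).add (((hin θ).exp).const_mul 150)
      refine h.congr_deriv ?_
      ring
    rw [intervalIntegral.integral_eq_sub_of_hasDerivAt (fun θ _ => hgd θ)
      (Continuous.intervalIntegrable (by fun_prop) _ _)]
    rw [Real.cos_zero, Real.cos_neg, Real.cos_pi]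
    have e1 : -(t * (1 - (-1 : ℝ))) = -(t * 2) := by ring
    have e2 : -(t * (1 - (1 : ℝ))) = 0 := by ring
    rw [e1, e2, Real.exp_zero]
    ring
  have hsplit := intervalIntegral.integral_add_adjacent_intervals
    (a := -π) (b := 0) (c := π) (hi _ _) (hi _ _)
  rw [← hsplit, hleft, hright]
  have := Real.exp_pos (-(t * 2))
  linarith

lemma R_bound (t : ℝ) (ht : 0 < t) (k : ℕ) (hk : 3 ≤ k) :
    |(∫ θ in (-π)..π, Ee t θ * Real.cos (((k + 1 : ℕ) : ℝ) * θ))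
      - 2 * (∫ θ in (-π)..π, Ee t θ * Real.cos ((k : ℝ) * θ))
      + (∫ θ in (-π)..π, Ee t θ * Real.cos (((k - 1 : ℕ) : ℝ) * θ))| ≤ 632 / (k : ℝ) ^ 3 := by
  have hi : ∀ j : ℕ, IntervalIntegrable (fun θ => Ee t θ * Real.cos ((j : ℝ) * θ))
      volume (-π) π := fun j =>
    ((continuous_Ee t).mul (Real.continuous_cos.comp
      (continuous_const.mul continuous_id))).intervalIntegrable _ _
  have hcomb : (∫ θ in (-π)..π, Ee t θ * Real.cos (((k + 1 : ℕ) : ℝ) * θ))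
      - 2 * (∫ θ in (-π)..π, Ee t θ * Real.cos ((k : ℝ) * θ))
      + (∫ θ in (-π)..π, Ee t θ * Real.cos (((k - 1 : ℕ) : ℝ) * θ))
      = ∫ θ in (-π)..π, (Ee t θ * Real.cos (((k + 1 : ℕ) : ℝ) * θ)
          - 2 * (Ee t θ * Real.cos ((k : ℝ) * θ))
          + Ee t θ * Real.cos (((k - 1 : ℕ) : ℝ) * θ)) := by
    rw [intervalIntegral.integral_add ((hi _).sub ((hi k).const_mul 2)) (hi _),
      intervalIntegral.integral_sub (hi _) ((hi k).const_mul 2),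
      intervalIntegral.integral_const_mul]
  have hpt : ∀ θ : ℝ, Ee t θ * Real.cos (((k + 1 : ℕ) : ℝ) * θ)
      - 2 * (Ee t θ * Real.cos ((k : ℝ) * θ)) + Ee t θ * Real.cos (((k - 1 : ℕ) : ℝ) * θ)
      = -2 * (ff t θ * Real.cos ((k : ℝ) * θ)) := by
    intro θ
    have h1 : ((k + 1 : ℕ) : ℝ) = (k : ℝ) + 1 := by push_cast; ring
    have h2 : ((k - 1 : ℕ) : ℝ) = (k : ℝ) - 1 := by
      have hk1 : 1 ≤ k := by omega
      push_cast [hk1]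
      ring
    rw [h1, h2, add_mul, sub_mul, one_mul, Real.cos_add, Real.cos_sub]
    unfold ff Ee
    ring
  rw [hcomb, intervalIntegral.integral_congr
    (g := fun θ => -2 * (ff t θ * Real.cos ((k : ℝ) * θ))) (fun θ _ => hpt θ),
    intervalIntegral.integral_const_mul, ibp t k (by omega)]
  have hIb : |∫ θ in (-π)..π, f3 t θ * Real.sin ((k : ℝ) * θ)| ≤ 316 := by
    have habs := intervalIntegral.abs_integral_le_integral_abs (μ := volume)
      (f := fun θ => f3 t θ * Real.sin ((k : ℝ) * θ)) neg_pi_le_pi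
    have hmono : (∫ θ in (-π)..π, |f3 t θ * Real.sin ((k : ℝ) * θ)|)
        ≤ ∫ θ in (-π)..π, (4 * |Real.sin θ|
          + 150 * (t * (|Real.sin θ| * Real.exp (-(t * (1 - Real.cos θ)))))) := by
      apply intervalIntegral.integral_mono_on neg_pi_le_pi
      · exact Continuous.intervalIntegrable
          (((continuous_f3 t).mul (Real.continuous_sin.comp
            (continuous_const.mul continuous_id))).abs) _ _
      · exact Continuous.intervalIntegrable (by fun_prop) _ _
      · intro θ _
        calc |f3 t θ * Real.sin ((k : ℝ) * θ)|
            = |f3 t θ| * |Real.sin ((k : ℝ) * θ)| := abs_mul _ _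
          _ ≤ |f3 t θ| * 1 := by
              exact mul_le_mul_of_nonneg_left
                (abs_le.mpr ⟨Real.neg_one_le_sin _, Real.sin_le_one _⟩) (abs_nonneg _)
          _ = |f3 t θ| := mul_one _
          _ ≤ _ := f3_abs_le t ht θ
    linarith [bnd_integral t ht]
  have hk0 : (0 : ℝ) < (k : ℝ) ^ 3 := by positivity
  calc |(-2 : ℝ) * ((∫ θ in (-π)..π, f3 t θ * Real.sin ((k : ℝ) * θ)) / (k : ℝ) ^ 3)|
      = 2 * (|∫ θ in (-π)..π, f3 t θ * Real.sin ((k : ℝ) * θ)| / (k : ℝ) ^ 3) := by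
        rw [abs_mul, abs_div, abs_of_pos hk0]
        norm_num
    _ ≤ 2 * (316 / (k : ℝ) ^ 3) := by
        have h := (div_le_div_iff_of_pos_right hk0).mpr hIb
        linarith
    _ = 632 / (k : ℝ) ^ 3 := by ring

lemma heatKernel_eq (t : ℝ) (n : ℤ) :
    heatKernel t n = (∫ θ in (-π)..π, Ee t θ * Real.cos ((n.natAbs : ℝ) * θ)) / (2 * π) := by
  have hπpos : (0 : ℝ) < 2 * π := by positivity
  unfold heatKernel
  have hG : ∀ m : ℕ, ((m.factorial : ℝ) * Real.Gamma ((m : ℝ) + (n.natAbs : ℝ) + 1))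
      = (m.factorial : ℝ) * ((m + n.natAbs).factorial : ℝ) := by
    intro m
    rw [show ((m : ℝ) + (n.natAbs : ℝ) + 1) = ((m + n.natAbs : ℕ) : ℝ) + 1 by push_cast; ring,
      Real.Gamma_nat_eq_factorial]
  simp_rw [hG]
  have hrep := rep t n.natAbs
  have hSig : (∑' m : ℕ, t ^ (2 * m + n.natAbs)
        / ((m.factorial : ℝ) * ((m + n.natAbs).factorial : ℝ)))
      = (∫ θ in (-π)..π, Real.exp (2 * t * Real.cos θ) * Real.cos ((n.natAbs : ℝ) * θ))
          / (2 * π) := by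
    rw [eq_div_iff (ne_of_gt hπpos)]
    linarith [hrep]
  rw [hSig]
  rw [show Real.exp (-2 * t) * ((∫ θ in (-π)..π,
      Real.exp (2 * t * Real.cos θ) * Real.cos ((n.natAbs : ℝ) * θ)) / (2 * π))
    = (Real.exp (-2 * t) * (∫ θ in (-π)..π,
      Real.exp (2 * t * Real.cos θ) * Real.cos ((n.natAbs : ℝ) * θ))) / (2 * π) from by ring]
  congr 1
  rw [← intervalIntegral.integral_const_mul]
  apply intervalIntegral.integral_congr
  intro θ _
  unfold Ee
  show Real.exp (-2 * t) * (Real.exp (2 * t * Real.cos θ) * Real.cos ((n.natAbs : ℝ) * θ))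
      = Real.exp (2 * t * (Real.cos θ - 1)) * Real.cos ((n.natAbs : ℝ) * θ)
  rw [show Real.exp (-2 * t) * (Real.exp (2 * t * Real.cos θ) * Real.cos ((n.natAbs : ℝ) * θ))
      = (Real.exp (-2 * t) * Real.exp (2 * t * Real.cos θ)) * Real.cos ((n.natAbs : ℝ) * θ)
      from by ring, ← Real.exp_add]
  rw [show -2 * t + 2 * t * Real.cos θ = 2 * t * (Real.cos θ - 1) from by ring]

end Stmt11

/-- `|Δ_d G(t,n)| ≤ C / |n|³` in the regime `|n|² ≥ t`, `|n| ≥ 3`. -/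
theorem stmt11 :
    ∃ C > 0, ∀ t : ℝ, 0 < t → ∀ n : ℤ, 3 ≤ |n| → t ≤ (|n| : ℝ) ^ 2 →
      |heatKernel t (n + 1) - 2 * heatKernel t n + heatKernel t (n - 1)| ≤
        C / (|n| : ℝ) ^ 3 := by
  refine ⟨632, by norm_num, ?_⟩
  intro t ht n hn _
  have hk3 : 3 ≤ n.natAbs := by
    have h := hn
    rw [Int.abs_eq_natAbs] at h
    exact_mod_cast h
  have hcast : |(n : ℝ)| = ((n.natAbs : ℕ) : ℝ) := by
    rw [← Int.cast_abs, Int.abs_eq_natAbs, Int.cast_natCast]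
  set k := n.natAbs with hkdef
  have hπpos : (0 : ℝ) < 2 * Real.pi := by positivity
  have hone : (1 : ℝ) ≤ 2 * Real.pi := by linarith [Real.pi_gt_three]
  rw [Stmt11.heatKernel_eq t (n + 1), Stmt11.heatKernel_eq t n, Stmt11.heatKernel_eq t (n - 1),
    hcast]
  have hRb := Stmt11.R_bound t ht k hk3
  set A := ∫ θ in (-Real.pi)..Real.pi, Stmt11.Ee t θ * Real.cos (((k + 1 : ℕ) : ℝ) * θ) with hA
  set B := ∫ θ in (-Real.pi)..Real.pi, Stmt11.Ee t θ * Real.cos ((k : ℝ) * θ) with hB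
  set D := ∫ θ in (-Real.pi)..Real.pi, Stmt11.Ee t θ * Real.cos (((k - 1 : ℕ) : ℝ) * θ) with hD
  have key : ∀ a b c : ℝ, |a - 2 * b + c| ≤ 632 / (k : ℝ) ^ 3 →
      |a / (2 * Real.pi) - 2 * (b / (2 * Real.pi)) + c / (2 * Real.pi)| ≤ 632 / (k : ℝ) ^ 3 := by
    intro a b c h
    have h2 : |a / (2 * Real.pi) - 2 * (b / (2 * Real.pi)) + c / (2 * Real.pi)|
        = |a - 2 * b + c| / (2 * Real.pi) := by
      rw [show a / (2 * Real.pi) - 2 * (b / (2 * Real.pi)) + c / (2 * Real.pi)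
          = (a - 2 * b + c) / (2 * Real.pi) from by ring, abs_div, abs_of_pos hπpos]
    rw [h2]
    calc |a - 2 * b + c| / (2 * Real.pi) ≤ |a - 2 * b + c| :=
          div_le_self (abs_nonneg _) hone
      _ ≤ 632 / (k : ℝ) ^ 3 := h
  rcases le_or_gt 0 n with hpos | hneg
  · have e1 : (n + 1).natAbs = k + 1 := by omega
    have e2 : (n - 1).natAbs = k - 1 := by omega
    rw [e1, e2]
    exact key A B D hRb
  · have e1 : (n + 1).natAbs = k - 1 := by omega
    have e2 : (n - 1).natAbs = k + 1 := by omega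
    rw [e1, e2]
    refine key D B A ?_
    have hcomm : D - 2 * B + A = A - 2 * B + D := by ring
    rw [hcomm]
    exact hRb
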